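/- In the Coxeter group W of type E₇, let u be an element of the parabolic subgroup P generated by s₂, s₃, s₄, s₅ whose length ℓ(u) is maximal among the lengths of elements of P. Then w₀ · (s₂s₅s₇) is conjugate in W to u. -/

import Mathlib

/-!
In the geometric representation of a simply-laced Coxeter group on the root lattice `ℤ^B`
(simple roots `αᵢ` the standard basis vectors), Tits' lemma says that `w αᵢ` is a nonnegative
vector when `ℓ (w sᵢ) > ℓ w` and a nonpositive one otherwise; it is proved by induction on `ℓ w`,
splitting off the part of `w` lying in a rank-two parabolic subgroup. Hence the representation is
faithful, an element having every `sᵢ` as a right descent is the element acting as `-1`, and an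
element of maximal length in a parabolic subgroup `W_I` is any element of `W_I` acting as `-1` on
the span of `(αᵢ)_{i ∈ I}`. For `E₇` this identifies `w₀ = (s₁ ⋯ s₇)⁹` and `u = (s₂s₃s₄s₅)³`,
and the conjugacy becomes an identity of integer matrices, checked by computation.
-/

open Matrix

namespace CoxeterMatrix

variable {B : Type*} (M : CoxeterMatrix B)

def IsSimplyLaced : Prop := ∀ i j, i ≠ j → M i j = 2 ∨ M i j = 3

variable [DecidableEq B]

/-- The Cartan matrix when `M` is simply laced; labels other than `3` count as `2` here. -/
def cartan : Matrix B B ℤ :=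
  Matrix.of fun i k => if i = k then 2 else if M i k = 3 then -1 else 0

def reflection (i : B) : Matrix B B ℤ :=
  Matrix.of fun r k => (if r = k then 1 else 0) - if r = i then M.cartan i k else 0

variable {M}

@[simp] lemma cartan_self (i : B) : M.cartan i i = 2 := by simp [cartan]

lemma cartan_of_eq_two {i j : B} (h : M i j = 2) : M.cartan i j = 0 := by
  have : i ≠ j := by rintro rfl; simp at h
  simp [cartan, this, h]

lemma cartan_of_eq_three {i j : B} (h : M i j = 3) : M.cartan i j = -1 := by
  have : i ≠ j := by rintro rfl; simp at h
  simp [cartan, this, h]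

variable [Fintype B]

lemma reflection_mulVec (i : B) (x : B → ℤ) :
    M.reflection i *ᵥ x = x - (M.cartan i ⬝ᵥ x) • Pi.single i 1 := by
  ext r
  by_cases hr : r = i
  · subst hr
    simp [reflection, mulVec, dotProduct, sub_mul, Finset.sum_sub_distrib]
  · simp [reflection, mulVec, dotProduct, hr]

lemma reflection_mulVec_single_self (i : B) :
    M.reflection i *ᵥ Pi.single i 1 = -Pi.single i 1 := by
  rw [reflection_mulVec, dotProduct_single, cartan_self]
  module

lemma reflection_mulVec_single_of_eq_two {i j : B} (h : M i j = 2) :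
    M.reflection j *ᵥ Pi.single i 1 = Pi.single i 1 := by
  rw [reflection_mulVec, dotProduct_single, cartan_of_eq_two (M.symmetric i j ▸ h)]
  simp

lemma reflection_mulVec_single_of_eq_three {i j : B} (h : M i j = 3) :
    M.reflection j *ᵥ Pi.single i 1 = Pi.single i 1 + Pi.single j 1 := by
  rw [reflection_mulVec, dotProduct_single, cartan_of_eq_three (M.symmetric i j ▸ h)]
  module

lemma reflection_mul_self (i : B) : M.reflection i * M.reflection i = 1 := by
  refine ext_iff_mulVec.mpr fun x => ?_
  simp only [← mulVec_mulVec, one_mulVec, reflection_mulVec, dotProduct_sub, dotProduct_smul,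
    dotProduct_single, cartan_self, smul_eq_mul]
  module

lemma reflection_comm_of_eq_two {i j : B} (h : M i j = 2) :
    M.reflection i * M.reflection j = M.reflection j * M.reflection i := by
  refine ext_iff_mulVec.mpr fun x => ?_
  simp only [← mulVec_mulVec, reflection_mulVec, dotProduct_sub, dotProduct_smul,
    dotProduct_single, cartan_of_eq_two h, cartan_of_eq_two (M.symmetric i j ▸ h), smul_eq_mul]
  module

lemma reflection_braid_of_eq_three {i j : B} (h : M i j = 3) :
    M.reflection i * M.reflection j * M.reflection i =
      M.reflection j * M.reflection i * M.reflection j := by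
  refine ext_iff_mulVec.mpr fun x => ?_
  simp only [← mulVec_mulVec, reflection_mulVec, dotProduct_sub, dotProduct_smul,
    dotProduct_single, cartan_self, cartan_of_eq_three h,
    cartan_of_eq_three (M.symmetric i j ▸ h), smul_eq_mul]
  module

theorem isLiftable_reflection (hM : M.IsSimplyLaced) : M.IsLiftable M.reflection := by
  intro i j
  rcases eq_or_ne i j with rfl | hij
  · simp [reflection_mul_self]
  have hi := reflection_mul_self (M := M) i
  have hj := reflection_mul_self (M := M) j
  rcases hM i j hij with h | h <;> rw [h]
  · rw [sq, mul_assoc, ← mul_assoc (M.reflection j), ← reflection_comm_of_eq_two h, mul_assoc,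
      hj, mul_one, hi]
  · calc (M.reflection i * M.reflection j) ^ 3
        = M.reflection i * M.reflection j * M.reflection i *
            (M.reflection j * M.reflection i * M.reflection j) := by
          simp only [pow_succ, pow_zero, one_mul, mul_assoc]
      _ = 1 := by
          rw [reflection_braid_of_eq_three h]
          simp only [mul_assoc]
          rw [← mul_assoc (M.reflection j) (M.reflection j), hj, one_mul,
            ← mul_assoc (M.reflection i) (M.reflection i), hi, one_mul, hj]

end CoxeterMatrix


namespace CoxeterSystem

variable {B W : Type*} [Group W] {M : CoxeterMatrix B} (cs : CoxeterSystem M W)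

local prefix:100 "s" => cs.simple
local prefix:100 "ℓ" => cs.length

lemma simple_mul_simple_comm_of_eq_two {i j : B} (h : M i j = 2) : s i * s j = s j * s i := by
  simpa [braidWord, h, M.symmetric j i, alternatingWord, wordProd] using
    cs.wordProd_braidWord_eq i j

lemma simple_braid_of_eq_three {i j : B} (h : M i j = 3) :
    s i * s j * s i = s j * s i * s j := by
  simpa [braidWord, h, M.symmetric j i, alternatingWord, wordProd, mul_assoc] using
    cs.wordProd_braidWord_eq j i

lemma closure_pair_subset_of_mul_mem {i j : B} {S : Set W} (one : 1 ∈ S) (hi : ∀ x ∈ S, x * s i ∈ S)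
    (hj : ∀ x ∈ S, x * s j ∈ S) : (Subgroup.closure {s i, s j} : Set W) ⊆ S := by
  have step : ∀ x ∈ S, ∀ y ∈ ({s i, s j} : Set W), x * y ∈ S := by
    rintro x hx y (rfl | rfl)
    exacts [hi x hx, hj x hx]
  intro v hv
  induction hv using Subgroup.closure_induction_right with
  | one => exact one
  | mul_right x _ y hy ih => exact step x ih y hy
  | mul_inv_cancel x _ y hy ih =>
    obtain rfl | rfl := hy <;> rw [inv_simple] <;> exact step _ ih _ (by simp)

lemma mem_closure_pair_of_eq_two {i j : B} (h : M i j = 2) {v : W}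
    (hv : v ∈ Subgroup.closure {s i, s j}) : v ∈ ({1, s i, s j, s i * s j} : Set W) := by
  have hc := cs.simple_mul_simple_comm_of_eq_two h
  refine cs.closure_pair_subset_of_mul_mem ?_ ?_ ?_ hv
  · simp
  · rintro x (rfl | rfl | rfl | rfl)
    all_goals simp [mul_assoc, hc]
  · rintro x (rfl | rfl | rfl | rfl)
    all_goals simp [mul_assoc, hc]

lemma mem_closure_pair_of_eq_three {i j : B} (h : M i j = 3) {v : W}
    (hv : v ∈ Subgroup.closure {s i, s j}) :
    v ∈ ({1, s i, s j, s i * s j, s j * s i, s i * s j * s i} : Set W) := by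
  have hb : s j * (s i * s j) = s i * (s j * s i) := by
    simpa only [mul_assoc] using (cs.simple_braid_of_eq_three h).symm
  refine cs.closure_pair_subset_of_mul_mem ?_ ?_ ?_ hv
  · simp
  · rintro x (rfl | rfl | rfl | rfl | rfl | rfl)
    all_goals simp [mul_assoc]
  · rintro x (rfl | rfl | rfl | rfl | rfl | rfl)
    all_goals simp [mul_assoc, hb]

lemma exists_reduced_mul_mem_closure_pair {w : W} (i : B) {j : B} (hj : cs.IsRightDescent w j) :
    ∃ u v, w = u * v ∧ v ∈ Subgroup.closure {s i, s j} ∧ ℓ w = ℓ u + ℓ v ∧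
      ¬cs.IsRightDescent u i ∧ ¬cs.IsRightDescent u j ∧ v ≠ 1 := by
  classical
  have hex : ∃ n u v, w = u * v ∧ v ∈ Subgroup.closure {s i, s j} ∧ ℓ w = ℓ u + ℓ v ∧
      ℓ u = n := ⟨ℓ w, w, 1, by simp, one_mem _, by simp, rfl⟩
  obtain ⟨u, v, hw, hv, hlen, hu⟩ := Nat.find_spec hex
  have not_descent : ∀ k, s k ∈ ({s i, s j} : Set W) → ¬cs.IsRightDescent u k := by
    intro k hk hdesc
    have hw' : w = u * s k * (s k * v) := by simp [hw, mul_assoc]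
    have hlen' : ℓ w = ℓ (u * s k) + ℓ (s k * v) := by
      have h1 := cs.length_mul_le (u * s k) (s k * v)
      have h2 := cs.length_mul_le (s k) v
      rw [← hw'] at h1
      rw [cs.length_simple] at h2
      unfold IsRightDescent at hdesc
      omega
    exact Nat.find_min hex (m := ℓ (u * s k)) (hu ▸ hdesc)
      ⟨u * s k, s k * v, hw', mul_mem (Subgroup.subset_closure hk) hv, hlen', rfl⟩
  refine ⟨u, v, hw, hv, hlen, not_descent i (by simp), not_descent j (by simp), ?_⟩
  rintro rfl
  exact not_descent j (by simp) (by simpa [hw] using hj)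

lemma eq_one_of_not_isRightDescent {v : W} {i : B} (hvi : ¬cs.IsRightDescent v i)
    (hle : ℓ (v * s i) ≤ 1) : v = 1 := by
  have := cs.not_isRightDescent_iff.mp hvi
  exact cs.length_eq_zero_iff.mp (by omega)

lemma wordProd_mem_closure_image {I : Set B} {ω : List B} (h : ∀ k ∈ ω, k ∈ I) :
    cs.wordProd ω ∈ Subgroup.closure (cs.simple '' I) :=
  (Subgroup.closure _).list_prod_mem fun _ hx => by
    obtain ⟨k, hk, rfl⟩ := List.mem_map.mp hx
    exact Subgroup.subset_closure ⟨k, h k hk, rfl⟩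

end CoxeterSystem

lemma Matrix.mulVec_eq_neg_of_mulVec_single {R n : Type*} [Ring R] [Fintype n] [DecidableEq n]
    {A : Matrix n n R} {I : Set n}
    (hA : ∀ k ∈ I, A *ᵥ Pi.single k 1 = -Pi.single k 1) {x : n → R}
    (hx : ∀ r ∉ I, x r = 0) : A *ᵥ x = -x := by
  ext r
  have hterm : ∀ k, A r k * x k = -((Pi.single k 1 : n → R) r * x k) := by
    intro k
    by_cases hk : k ∈ I
    · have := congrFun (hA k hk) r
      rw [mulVec_single_one] at this
      rw [show A r k = _ from this, Pi.neg_apply, neg_mul]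
    · simp [hx k hk]
  simp [mulVec, dotProduct, hterm, Pi.single_apply]


namespace CoxeterSystem

open Matrix

variable {B W : Type*} [Fintype B] [DecidableEq B] [Group W] {M : CoxeterMatrix B}
  (cs : CoxeterSystem M W) (hM : M.IsSimplyLaced)

noncomputable def geomRep : W →* Matrix B B ℤ :=
  cs.lift ⟨M.reflection, M.isLiftable_reflection hM⟩

local prefix:100 "s" => cs.simple
local prefix:100 "ℓ" => cs.length

@[simp] lemma geomRep_simple (i : B) : cs.geomRep hM (s i) = M.reflection i :=
  cs.lift_apply_simple _ i

lemma geomRep_wordProd (ω : List B) :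
    cs.geomRep hM (cs.wordProd ω) = (ω.map M.reflection).prod := by
  simp [wordProd, map_list_prod, Function.comp_def]

lemma simple_mul_simple_mul_simple_ne_simple (hM : M.IsSimplyLaced) {i j : B} (h : M i j = 3)
    (k : B) : s i * s j * s i ≠ s k := by
  have hij : i ≠ j := by rintro rfl; simp at h
  have hL : cs.geomRep hM (s i * s j * s i) *ᵥ Pi.single i 1 = -Pi.single j 1 := by
    simp only [map_mul, ← mulVec_mulVec, geomRep_simple, M.reflection_mulVec_single_self,
      mulVec_neg, M.reflection_mulVec_single_of_eq_three h, mulVec_add,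
      M.reflection_mulVec_single_of_eq_three (M.symmetric i j ▸ h)]
    abel
  intro heq
  have := congrFun hL i
  rw [heq, geomRep_simple, M.reflection_mulVec] at this
  rcases eq_or_ne k i with rfl | hki
  · simp [hij] at this
  · simp [hij, hki] at this

/-- The inductive step of `geomRep_mulVec_single_pos`: the rank-two factor `v` sends `αᵢ` to one
of `αᵢ`, `αᵢ + αⱼ`, `αⱼ`, the other elements of `⟨sᵢ, sⱼ⟩` having `sᵢ` as a right descent. -/
lemma geomRep_mul_mulVec_single_pos {u v : W} {i j : B} (hij : i ≠ j)
    (hui : 0 < cs.geomRep hM u *ᵥ Pi.single i 1) (huj : 0 < cs.geomRep hM u *ᵥ Pi.single j 1)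
    (hv : v ∈ Subgroup.closure {s i, s j}) (hv1 : v ≠ 1) (hvi : ¬cs.IsRightDescent v i) :
    0 < cs.geomRep hM (u * v) *ᵥ Pi.single i 1 := by
  have hvi' : ∀ x, v * s i = x → ℓ x ≤ 1 → False := fun x hx hle =>
    hv1 (cs.eq_one_of_not_isRightDescent hvi (hx ▸ hle))
  rw [map_mul, ← mulVec_mulVec]
  rcases hM i j hij with h | h
  · obtain rfl | rfl | rfl | rfl := cs.mem_closure_pair_of_eq_two h hv
    · exact absurd rfl hv1
    · exact (hvi' 1 (cs.simple_mul_simple_self i) (by simp)).elim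
    · rwa [geomRep_simple, M.reflection_mulVec_single_of_eq_two h]
    · exact (hvi' (s j) (by rw [cs.simple_mul_simple_comm_of_eq_two h,
        cs.simple_mul_simple_cancel_right]) (by simp)).elim
  · obtain rfl | rfl | rfl | rfl | rfl | rfl := cs.mem_closure_pair_of_eq_three h hv
    · exact absurd rfl hv1
    · exact (hvi' 1 (cs.simple_mul_simple_self i) (by simp)).elim
    · rw [geomRep_simple, M.reflection_mulVec_single_of_eq_three h, mulVec_add]
      exact add_pos hui huj
    · rwa [map_mul, ← mulVec_mulVec, geomRep_simple, geomRep_simple,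
        M.reflection_mulVec_single_of_eq_three h, mulVec_add, M.reflection_mulVec_single_self,
        M.reflection_mulVec_single_of_eq_three (M.symmetric i j ▸ h), add_comm (Pi.single j 1),
        neg_add_cancel_left]
    · exact (hvi' (s j) (cs.simple_mul_simple_cancel_right i) (by simp)).elim
    · have hlen : ℓ (s i * s j * s i) ≤ 1 := by
        have := cs.length_mul_le (s i) (s j)
        simp only [cs.length_simple] at this
        have := cs.not_isRightDescent_iff.mp hvi
        rw [cs.simple_mul_simple_cancel_right] at this
        omega
      obtain ⟨k, hk⟩ := cs.length_eq_one_iff.mp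
        (le_antisymm hlen (Nat.one_le_iff_ne_zero.mpr (mt cs.length_eq_zero_iff.mp hv1)))
      exact (cs.simple_mul_simple_mul_simple_ne_simple hM h k hk).elim

theorem geomRep_mulVec_single_pos {w : W} {i : B} (hi : ¬cs.IsRightDescent w i) :
    0 < cs.geomRep hM w *ᵥ Pi.single i 1 := by
  induction hn : ℓ w using Nat.strong_induction_on generalizing w i with
  | _ n ih =>
  rcases eq_or_ne w 1 with rfl | hw1
  · rw [map_one, one_mulVec]
    exact Pi.single_pos.mpr one_pos
  obtain ⟨j, hj⟩ := cs.exists_rightDescent_of_ne_one hw1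
  have hij : i ≠ j := by rintro rfl; exact hi hj
  obtain ⟨u, v, rfl, hv, hlen, hui, huj, hv1⟩ := cs.exists_reduced_mul_mem_closure_pair i hj
  have hu : ℓ u < n := by
    have := mt cs.length_eq_zero_iff.mp hv1
    omega
  have hvi : ¬cs.IsRightDescent v i := by
    have h1 := cs.not_isRightDescent_iff.mp hi
    have h2 := cs.length_mul_le u (v * s i)
    rw [← mul_assoc] at h2
    unfold IsRightDescent
    omega
  exact cs.geomRep_mul_mulVec_single_pos hM hij (ih _ hu hui rfl) (ih _ hu huj rfl) hv hv1 hvi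

theorem geomRep_mulVec_single_neg {w : W} {i : B} (hi : cs.IsRightDescent w i) :
    cs.geomRep hM w *ᵥ Pi.single i 1 < 0 := by
  have hpos := cs.geomRep_mulVec_single_pos hM
    (cs.isRightDescent_iff_not_isRightDescent_mul.mp hi)
  rwa [map_mul, ← mulVec_mulVec, geomRep_simple, M.reflection_mulVec_single_self, mulVec_neg,
    neg_pos] at hpos

theorem geomRep_injective : Function.Injective (cs.geomRep hM) := by
  intro a b hab
  by_contra hne
  obtain ⟨j, hj⟩ := cs.exists_rightDescent_of_ne_one (mt inv_mul_eq_one.mp (Ne.symm hne))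
  have hneg := cs.geomRep_mulVec_single_neg hM hj
  rw [map_mul, hab, ← map_mul, inv_mul_cancel, map_one, one_mulVec] at hneg
  exact hneg.not_gt (Pi.single_pos.mpr one_pos)

theorem eq_of_forall_isRightDescent {z w : W} (hz : cs.geomRep hM z = -1)
    (hw : ∀ i, cs.IsRightDescent w i) : w = z := by
  by_contra hne
  obtain ⟨j, hj⟩ := cs.exists_rightDescent_of_ne_one (mt inv_mul_eq_one.mp (Ne.symm hne))
  have hw_eq : cs.geomRep hM w = -cs.geomRep hM (z⁻¹ * w) := by
    conv_lhs => rw [← mul_inv_cancel_left z w]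
    rw [map_mul, hz, neg_one_mul]
  have hpos := neg_pos.mpr (cs.geomRep_mulVec_single_neg hM hj)
  rw [← neg_mulVec, ← hw_eq] at hpos
  exact (cs.geomRep_mulVec_single_neg hM (hw j)).not_gt hpos

lemma geomRep_mulVec_apply_of_notMem {I : Set B} {v : W}
    (hv : v ∈ Subgroup.closure (cs.simple '' I)) (x : B → ℤ) {r : B} (hr : r ∉ I) :
    (cs.geomRep hM v *ᵥ x) r = x r := by
  induction hv using Subgroup.closure_induction generalizing x with
  | mem y hy =>
    obtain ⟨k, hk, rfl⟩ := hy
    have hrk : r ≠ k := by rintro rfl; exact hr hk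
    simp [M.reflection_mulVec, hrk]
  | one => simp
  | mul a b _ _ iha ihb => rw [map_mul, ← mulVec_mulVec, iha, ihb]
  | inv a _ iha =>
    rw [← iha (cs.geomRep hM a⁻¹ *ᵥ x), mulVec_mulVec, ← map_mul, mul_inv_cancel, map_one,
      one_mulVec]

theorem eq_of_forall_length_le_of_mem_closure {I : Set B} {u₀ u : W}
    (hu₀ : u₀ ∈ Subgroup.closure (cs.simple '' I))
    (hneg : ∀ k ∈ I, cs.geomRep hM u₀ *ᵥ Pi.single k 1 = -Pi.single k 1)
    (hu : u ∈ Subgroup.closure (cs.simple '' I))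
    (hmax : ∀ v ∈ Subgroup.closure (cs.simple '' I), ℓ v ≤ ℓ u) : u = u₀ := by
  by_contra hne
  obtain ⟨k, hk⟩ := cs.exists_rightDescent_of_ne_one (mt inv_mul_eq_one.mp (Ne.symm hne))
  have hdesc := cs.geomRep_mulVec_single_neg hM hk
  have hmem : u₀⁻¹ * u ∈ Subgroup.closure (cs.simple '' I) := mul_mem (inv_mem hu₀) hu
  by_cases hkI : k ∈ I
  · have huk : cs.IsRightDescent u k := lt_of_le_of_ne
      (hmax _ (mul_mem hu (Subgroup.subset_closure ⟨k, hkI, rfl⟩))) (cs.length_mul_simple_ne u k)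
    set y := cs.geomRep hM u *ᵥ Pi.single k 1 with hy
    have hyI : ∀ r ∉ I, y r = 0 := fun r hr => by
      rw [hy, cs.geomRep_mulVec_apply_of_notMem hM hu _ hr,
        Pi.single_eq_of_ne (by rintro rfl; exact hr hkI)]
    have hu₀y : cs.geomRep hM u₀⁻¹ *ᵥ y = -y := calc
      _ = cs.geomRep hM u₀⁻¹ *ᵥ -(cs.geomRep hM u₀ *ᵥ y) := by
        rw [mulVec_eq_neg_of_mulVec_single hneg hyI, neg_neg]
      _ = -y := by rw [mulVec_neg, mulVec_mulVec, ← map_mul, inv_mul_cancel, map_one, one_mulVec]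
    rw [map_mul, ← mulVec_mulVec, ← hy, hu₀y, neg_lt_zero] at hdesc
    exact (cs.geomRep_mulVec_single_neg hM huk).not_gt hdesc
  · have := hdesc.le k
    rw [cs.geomRep_mulVec_apply_of_notMem hM hmem _ hkI] at this
    simp at this

end CoxeterSystem

namespace CoxeterMatrix

lemma isSimplyLaced_E₇ : E₇.IsSimplyLaced := by
  intro i j
  fin_cases i <;> fin_cases j <;> decide

namespace E₇

open Matrix CoxeterSystem

/-- `(s₁ ⋯ s₇)⁹` (index `i` stands for `sᵢ₊₁`): a Coxeter element to the power half the
Coxeter number `18`. -/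
def longestWord : List (Fin 7) := (List.replicate 9 [0, 1, 2, 3, 4, 5, 6]).flatten

/-- `(s₂s₃s₄s₅)³`, the same construction in the parabolic subgroup of type `D₄`. -/
def longestWordD₄ : List (Fin 7) := (List.replicate 3 [1, 2, 3, 4]).flatten

/-- Found by computer search. -/
def conjugatingWord : List (Fin 7) :=
  [5, 6, 0, 2, 3, 4, 5, 1, 3, 4, 2, 3, 0, 2, 1, 3, 4, 5, 2, 3, 0, 2, 1, 3]

set_option maxRecDepth 10000 in
lemma prod_reflection_longestWord : (longestWord.map E₇.reflection).prod = -1 := by decide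

set_option maxRecDepth 10000 in
lemma prod_reflection_longestWordD₄_mulVec_single :
    ∀ k ∈ ({1, 2, 3, 4} : Finset (Fin 7)),
      (longestWordD₄.map E₇.reflection).prod *ᵥ Pi.single k 1 = -Pi.single k 1 := by
  decide

set_option maxRecDepth 10000 in
lemma prod_reflection_conjugatingWord_mul :
    (conjugatingWord.map E₇.reflection).prod *
        -(E₇.reflection 1 * E₇.reflection 4 * E₇.reflection 6) =
      (longestWordD₄.map E₇.reflection).prod * (conjugatingWord.map E₇.reflection).prod := by
  decide

lemma geomRep_wordProd_longestWord :
    E₇.toCoxeterSystem.geomRep isSimplyLaced_E₇ (E₇.toCoxeterSystem.wordProd longestWord) =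
      -1 := by
  rw [geomRep_wordProd, prod_reflection_longestWord]

theorem eq_wordProd_longestWord {w₀ : E₇.Group}
    (hw₀ : ∀ w, E₇.toCoxeterSystem.length w ≤ E₇.toCoxeterSystem.length w₀) :
    w₀ = E₇.toCoxeterSystem.wordProd longestWord :=
  E₇.toCoxeterSystem.eq_of_forall_isRightDescent isSimplyLaced_E₇ geomRep_wordProd_longestWord
    fun i => lt_of_le_of_ne (hw₀ _) (E₇.toCoxeterSystem.length_mul_simple_ne w₀ i)

theorem eq_wordProd_longestWordD₄ {u : E₇.Group}
    (hu : u ∈ Subgroup.closure (E₇.toCoxeterSystem.simple '' {1, 2, 3, 4}))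
    (humax : ∀ v ∈ Subgroup.closure (E₇.toCoxeterSystem.simple '' {1, 2, 3, 4}),
      E₇.toCoxeterSystem.length v ≤ E₇.toCoxeterSystem.length u) :
    u = E₇.toCoxeterSystem.wordProd longestWordD₄ := by
  refine E₇.toCoxeterSystem.eq_of_forall_length_le_of_mem_closure isSimplyLaced_E₇
    (E₇.toCoxeterSystem.wordProd_mem_closure_image ?_) (fun k hk => ?_) hu humax
  · simp [longestWordD₄]
  · rw [geomRep_wordProd]
    exact prod_reflection_longestWordD₄_mulVec_single k (by simpa using hk)

theorem isConj_wordProd_longestWord_mul :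
    IsConj (E₇.toCoxeterSystem.wordProd longestWord *
        (E₇.toCoxeterSystem.simple 1 * E₇.toCoxeterSystem.simple 4 *
          E₇.toCoxeterSystem.simple 6))
      (E₇.toCoxeterSystem.wordProd longestWordD₄) := by
  refine isConj_iff.mpr ⟨E₇.toCoxeterSystem.wordProd conjugatingWord, mul_inv_eq_of_eq_mul ?_⟩
  apply E₇.toCoxeterSystem.geomRep_injective isSimplyLaced_E₇
  simp only [map_mul]
  rw [geomRep_wordProd_longestWord, neg_one_mul]
  simp only [geomRep_wordProd, geomRep_simple]
  exact prod_reflection_conjugatingWord_mul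

end E₇

end CoxeterMatrix

/-- In the Coxeter group `W` of type `E₇` (with simple reflections `s₁, …, s₇` in Bourbaki
numbering, here 0-indexed as `s 0, …, s 6`), let `u` be an element of the parabolic
subgroup `P` generated by `s₂, s₃, s₄, s₅` whose length is maximal among the lengths of
elements of `P`.  Then `w₀ · (s₂ s₅ s₇)` is conjugate in `W` to `u`, where `w₀` is an
element of maximal Coxeter length in `W`. -/
theorem stmt14 (w₀ : CoxeterMatrix.E₇.Group)
    (hw₀ : ∀ w : CoxeterMatrix.E₇.Group,
      CoxeterMatrix.E₇.toCoxeterSystem.length w ≤ CoxeterMatrix.E₇.toCoxeterSystem.length w₀)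
    (u : CoxeterMatrix.E₇.Group)
    (hu : u ∈ Subgroup.closure {CoxeterMatrix.E₇.simple 1, CoxeterMatrix.E₇.simple 2,
      CoxeterMatrix.E₇.simple 3, CoxeterMatrix.E₇.simple 4})
    (humax : ∀ v ∈ Subgroup.closure {CoxeterMatrix.E₇.simple 1, CoxeterMatrix.E₇.simple 2,
        CoxeterMatrix.E₇.simple 3, CoxeterMatrix.E₇.simple 4},
      CoxeterMatrix.E₇.toCoxeterSystem.length v ≤ CoxeterMatrix.E₇.toCoxeterSystem.length u) :
    IsConj (w₀ * (CoxeterMatrix.E₇.simple 1 * CoxeterMatrix.E₇.simple 4 *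
      CoxeterMatrix.E₇.simple 6)) u := by
  have hP : ({CoxeterMatrix.E₇.simple 1, CoxeterMatrix.E₇.simple 2, CoxeterMatrix.E₇.simple 3,
      CoxeterMatrix.E₇.simple 4} : Set CoxeterMatrix.E₇.Group) =
      CoxeterMatrix.E₇.toCoxeterSystem.simple '' {1, 2, 3, 4} := by
    simp [Set.image_insert_eq, CoxeterMatrix.toCoxeterSystem_simple]
  rw [hP] at hu humax
  rw [CoxeterMatrix.E₇.eq_wordProd_longestWord hw₀,
    CoxeterMatrix.E₇.eq_wordProd_longestWordD₄ hu humax]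
  exact CoxeterMatrix.E₇.isConj_wordProd_longestWord_mul
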